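/- Let x, y, z ∈ ℍⁿ with z ≠ x and z ≠ y, and let x', y' be the midpoints of the segments zx and zy. If the angle ∠xzy equals 2π/3, then dist(x', y') < (1/2)·dist(x, y). -/

import Mathlib

open Real

/-- Inverse hyperbolic cosine. -/
noncomputable def arcosh (x : ℝ) : ℝ := Real.log (x + Real.sqrt (x ^ 2 - 1))

/-- A point of hyperbolic `n`-space in the Poincaré ball model. -/
abbrev HypSpace (n : ℕ) := {p : EuclideanSpace ℝ (Fin n) // ‖p‖ < 1}

/-- The hyperbolic distance in the Poincaré ball model. -/
noncomputable def hDist {n : ℕ} (x y : HypSpace n) : ℝ :=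
  _root_.arcosh (1 + 2 * ‖(x : EuclideanSpace ℝ (Fin n)) - (y : EuclideanSpace ℝ (Fin n))‖ ^ 2 /
    ((1 - ‖(x : EuclideanSpace ℝ (Fin n))‖ ^ 2) * (1 - ‖(y : EuclideanSpace ℝ (Fin n))‖ ^ 2)))

/-- `m` is the midpoint of the geodesic segment from `p` to `q`:  it lies on the segment
(distances add up) and divides it into two equal halves. -/
def IsHypMidpoint {n : ℕ} (p m q : HypSpace n) : Prop :=
  hDist p m = hDist p q / 2 ∧ hDist m q = hDist p q / 2


/-- The hyperbolic angle `∠ x z y` at the vertex `z`, defined via the hyperbolic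
law of cosines. -/
noncomputable def hAngle {n : ℕ} (x z y : HypSpace n) : ℝ :=
  Real.arccos ((Real.cosh (hDist z x) * Real.cosh (hDist z y) - Real.cosh (hDist x y)) /
    (Real.sinh (hDist z x) * Real.sinh (hDist z y)))

/-!
Map the Poincaré ball to the hyperboloid `t² - ‖v‖² = 1`, on which `cosh` of the hyperbolic
distance is the Minkowski pairing. The midpoint of `pq` is then `(p + q) / (2 cosh (d(p, q) / 2))`,
since the difference is a null vector orthogonal to the timelike vector `p`. Pairing the two
midpoints shows that the triangle `x' z y'` obeys the law of cosines with the angle `θ` of `x z y`,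
and then `cosh d(x, y) - cosh (2 d(x', y')) = 2 sin² θ sinh² (d(z, x) / 2) sinh² (d(z, y) / 2)`,
which is positive.
-/

open RealInnerProductSpace

theorem arcosh_eq_real_arcosh : _root_.arcosh = Real.arcosh := rfl

theorem cosh_eq_two_mul_cosh_half_sq_sub_one (x : ℝ) : cosh x = 2 * cosh (x / 2) ^ 2 - 1 := by
  have h := cosh_two_mul (x / 2)
  rw [mul_div_cancel₀ x two_ne_zero] at h
  linear_combination h - cosh_sq (x / 2)

theorem cosh_two_mul_lt_of_law_of_cosines {a b c d θ : ℝ} (ha : a ≠ 0) (hb : b ≠ 0)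
    (hθ : sin θ ≠ 0) (hc : cosh c = cosh a * cosh b - cos θ * sinh a * sinh b)
    (hd : 4 * cosh (a / 2) * cosh (b / 2) * cosh d = 1 + cosh a + cosh b + cosh c) :
    cosh (2 * d) < cosh c := by
  set α := a / 2
  set β := b / 2
  have hα : a = 2 * α := by ring
  have hβ : b = 2 * β := by ring
  rw [hα, hβ, cosh_two_mul, cosh_two_mul, sinh_two_mul, sinh_two_mul] at hc
  rw [hα, hβ, cosh_two_mul, cosh_two_mul] at hd
  have hd' : cosh d = cosh α * cosh β - cos θ * sinh α * sinh β := by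
    have h0 : 4 * cosh α * cosh β ≠ 0 := by positivity
    apply mul_left_cancel₀ h0
    rw [hd, hc]
    linear_combination -(cosh β ^ 2 + sinh β ^ 2 + 1) * cosh_sq α - 2 * cosh α ^ 2 * cosh_sq β
  have hgap : cosh c - cosh (2 * d) = 2 * sin θ ^ 2 * sinh α ^ 2 * sinh β ^ 2 := by
    have h2d : cosh (2 * d) = 2 * cosh d ^ 2 - 1 := by
      linear_combination cosh_two_mul d - cosh_sq d
    rw [h2d, hd', hc]
    linear_combination (sinh β ^ 2 - cosh β ^ 2) * cosh_sq α - cosh_sq β -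
      2 * sinh α ^ 2 * sinh β ^ 2 * sin_sq_add_cos_sq θ
  have hsα : sinh α ≠ 0 := sinh_ne_zero.2 (by positivity)
  have hsβ : sinh β ≠ 0 := sinh_ne_zero.2 (by positivity)
  have : 0 < 2 * sin θ ^ 2 * sinh α ^ 2 * sinh β ^ 2 := by positivity
  linarith

section Minkowski

variable {E : Type*} [NormedAddCommGroup E] [InnerProductSpace ℝ E]

noncomputable def minkowski : LinearMap.BilinForm ℝ (ℝ × E) :=
  (LinearMap.mul ℝ ℝ).compl₁₂ (LinearMap.fst ℝ ℝ E) (LinearMap.fst ℝ ℝ E) -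
    (innerₛₗ ℝ).compl₁₂ (LinearMap.snd ℝ ℝ E) (LinearMap.snd ℝ ℝ E)

@[simp]
theorem minkowski_apply (p q : ℝ × E) : minkowski p q = p.1 * q.1 - ⟪p.2, q.2⟫ := rfl

theorem minkowski_comm (p q : ℝ × E) : minkowski p q = minkowski q p := by
  simp only [minkowski_apply, mul_comm, real_inner_comm]

theorem eq_zero_of_minkowski_self_eq_zero {w p : ℝ × E} (hw : minkowski w w = 0)
    (hwp : minkowski w p = 0) (hp : 0 < minkowski p p) : w = 0 := by
  obtain ⟨t, v⟩ := w
  obtain ⟨s, u⟩ := p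
  simp only [minkowski_apply, real_inner_self_eq_norm_sq] at hw hwp hp
  have hcs : ⟪v, u⟫ ^ 2 ≤ ‖v‖ ^ 2 * ‖u‖ ^ 2 := by
    rw [← mul_pow, ← sq_abs]
    exact pow_le_pow_left₀ (abs_nonneg _) (abs_real_inner_le_norm v u) 2
  have ht : t = 0 := by
    have hts : (t * s) ^ 2 ≤ t ^ 2 * ‖u‖ ^ 2 := by
      rwa [show t * s = ⟪v, u⟫ by linarith, show t ^ 2 = ‖v‖ ^ 2 by linarith]
    have : t ^ 2 ≤ 0 := by nlinarith
    exact pow_eq_zero_iff two_ne_zero |>.1 (le_antisymm this (sq_nonneg t))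
  have hv : v = 0 := by
    rw [ht] at hw
    simpa using hw
  simp [ht, hv]

theorem smul_eq_add_of_minkowski_eq {p m q : ℝ × E} {C : ℝ} (hp : minkowski p p = 1)
    (hm : minkowski m m = 1) (hq : minkowski q q = 1) (hpm : minkowski p m = C)
    (hmq : minkowski m q = C) (hpq : minkowski p q = 2 * C ^ 2 - 1) :
    (2 * C) • m = p + q := by
  have hmp : minkowski m p = C := by rw [minkowski_comm, hpm]
  have hqp : minkowski q p = 2 * C ^ 2 - 1 := by rw [minkowski_comm, hpq]
  have hqm : minkowski q m = C := by rw [minkowski_comm, hmq]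
  refine sub_eq_zero.1 (eq_zero_of_minkowski_self_eq_zero (p := p) ?_ ?_ (hp ▸ one_pos))
  · simp only [map_sub, map_add, map_smul, LinearMap.sub_apply, LinearMap.add_apply,
      LinearMap.smul_apply, smul_eq_mul, hp, hm, hq, hpm, hmp, hmq, hqm, hpq, hqp]
    ring
  · simp only [map_sub, map_add, map_smul, LinearMap.sub_apply, LinearMap.add_apply,
      LinearMap.smul_apply, smul_eq_mul, hp, hmp, hqp]
    ring

end Minkowski

namespace HypSpace

variable {n : ℕ}

theorem one_sub_norm_sq_pos (u : HypSpace n) : 0 < 1 - ‖u.1‖ ^ 2 :=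
  sub_pos.2 (pow_lt_one₀ (norm_nonneg _) u.2 two_ne_zero)

/-- The standard isometry of the Poincaré ball onto the upper sheet of `t² - ‖v‖² = 1`. -/
noncomputable def toHyperboloid (u : HypSpace n) : ℝ × EuclideanSpace ℝ (Fin n) :=
  ((1 + ‖u.1‖ ^ 2) / (1 - ‖u.1‖ ^ 2), (2 / (1 - ‖u.1‖ ^ 2)) • u.1)

theorem one_le_hDist_arg (u v : HypSpace n) :
    1 ≤ 1 + 2 * ‖u.1 - v.1‖ ^ 2 / ((1 - ‖u.1‖ ^ 2) * (1 - ‖v.1‖ ^ 2)) := by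
  have := one_sub_norm_sq_pos u
  have := one_sub_norm_sq_pos v
  exact le_add_of_nonneg_right (by positivity)

theorem cosh_hDist (u v : HypSpace n) :
    cosh (hDist u v) = 1 + 2 * ‖u.1 - v.1‖ ^ 2 / ((1 - ‖u.1‖ ^ 2) * (1 - ‖v.1‖ ^ 2)) :=
  Real.cosh_arcosh (one_le_hDist_arg u v)

theorem hDist_nonneg (u v : HypSpace n) : 0 ≤ hDist u v :=
  Real.arcosh_nonneg (one_le_hDist_arg u v)

theorem hDist_pos {u v : HypSpace n} (h : u ≠ v) : 0 < hDist u v := by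
  have := one_sub_norm_sq_pos u
  have := one_sub_norm_sq_pos v
  have : 0 < ‖u.1 - v.1‖ := norm_pos_iff.2 (sub_ne_zero.2 (Subtype.coe_injective.ne h))
  exact Real.arcosh_pos (lt_add_of_pos_right _ (by positivity))

theorem hDist_self (u : HypSpace n) : hDist u u = 0 := by
  simp [hDist, arcosh_eq_real_arcosh]

theorem hDist_comm (u v : HypSpace n) : hDist u v = hDist v u := by
  rw [hDist, hDist, norm_sub_rev, mul_comm (1 - ‖u.1‖ ^ 2)]

theorem minkowski_toHyperboloid (u v : HypSpace n) :
    minkowski u.toHyperboloid v.toHyperboloid = cosh (hDist u v) := by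
  have := one_sub_norm_sq_pos u
  have := one_sub_norm_sq_pos v
  rw [cosh_hDist, toHyperboloid, toHyperboloid, minkowski_apply, real_inner_smul_left,
    real_inner_smul_right, norm_sub_sq_real]
  field_simp
  ring

end HypSpace

open HypSpace

theorem IsHypMidpoint.two_mul_cosh_mul_cosh_hDist {n : ℕ} {p m q : HypSpace n}
    (h : IsHypMidpoint p m q) (w : HypSpace n) :
    2 * cosh (hDist p q / 2) * cosh (hDist m w) = cosh (hDist p w) + cosh (hDist q w) := by
  have hsum :
      (2 * cosh (hDist p q / 2)) • m.toHyperboloid = p.toHyperboloid + q.toHyperboloid := by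
    apply smul_eq_add_of_minkowski_eq <;>
      simp only [minkowski_toHyperboloid, hDist_self, cosh_zero, h.1, h.2]
    exact cosh_eq_two_mul_cosh_half_sq_sub_one _
  simpa only [map_smul, map_add, LinearMap.smul_apply, LinearMap.add_apply, smul_eq_mul,
    minkowski_toHyperboloid] using congrArg (minkowski · w.toHyperboloid) hsum

theorem four_mul_cosh_mul_cosh_mul_cosh_hDist_of_isHypMidpoint {n : ℕ}
    {x y z x' y' : HypSpace n} (hx' : IsHypMidpoint z x' x) (hy' : IsHypMidpoint z y' y) :
    4 * cosh (hDist z x / 2) * cosh (hDist z y / 2) * cosh (hDist x' y') =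
      1 + cosh (hDist z x) + cosh (hDist z y) + cosh (hDist x y) := by
  have hx := hx'.two_mul_cosh_mul_cosh_hDist y'
  have hy := hy'.two_mul_cosh_mul_cosh_hDist x
  rw [hy'.1] at hx
  rw [hDist_comm y', hDist_comm y] at hy
  linear_combination 2 * cosh (hDist z y / 2) * hx + hy -
    cosh_eq_two_mul_cosh_half_sq_sub_one (hDist z y)

theorem cosh_hDist_eq_of_hAngle_mem_Ioo {n : ℕ} {x y z : HypSpace n} (hzx : z ≠ x)
    (hzy : z ≠ y) (hθ : hAngle x z y ∈ Set.Ioo 0 π) :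
    cosh (hDist x y) = cosh (hDist z x) * cosh (hDist z y) -
      cos (hAngle x z y) * sinh (hDist z x) * sinh (hDist z y) := by
  have hsx : sinh (hDist z x) ≠ 0 := (sinh_pos_iff.2 (hDist_pos hzx)).ne'
  have hsy : sinh (hDist z y) ≠ 0 := (sinh_pos_iff.2 (hDist_pos hzy)).ne'
  obtain ⟨h0, hπ⟩ := hθ
  unfold hAngle at h0 hπ ⊢
  rw [cos_arccos (arccos_lt_pi.1 hπ).le (arccos_pos.1 h0).le]
  field_simp
  ring

theorem hDist_lt_half_of_isHypMidpoint {n : ℕ} {x y z x' y' : HypSpace n} (hzx : z ≠ x)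
    (hzy : z ≠ y) (hx' : IsHypMidpoint z x' x) (hy' : IsHypMidpoint z y' y)
    (hθ : hAngle x z y ∈ Set.Ioo 0 π) :
    hDist x' y' < hDist x y / 2 := by
  have hlt := cosh_two_mul_lt_of_law_of_cosines (hDist_pos hzx).ne' (hDist_pos hzy).ne'
    (sin_pos_of_pos_of_lt_pi hθ.1 hθ.2).ne' (cosh_hDist_eq_of_hAngle_mem_Ioo hzx hzy hθ)
    (four_mul_cosh_mul_cosh_mul_cosh_hDist_of_isHypMidpoint hx' hy')
  rw [cosh_lt_cosh, abs_of_nonneg (by linarith [hDist_nonneg x' y']),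
    abs_of_nonneg (hDist_nonneg x y)] at hlt
  linarith

theorem midpoint_dist_lt_half_of_angle_two_pi_div_three {n : ℕ} (x y z x' y' : HypSpace n)
    (hzx : z ≠ x) (hzy : z ≠ y)
    (hx' : IsHypMidpoint z x' x) (hy' : IsHypMidpoint z y' y)
    (hangle : hAngle x z y = 2 * Real.pi / 3) :
    hDist x' y' < (1 / 2) * hDist x y := by
  have hθ : hAngle x z y ∈ Set.Ioo 0 π := by
    rw [hangle]
    constructor <;> linarith [pi_pos]
  linarith [hDist_lt_half_of_isHypMidpoint hzx hzy hx' hy' hθ]
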